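/- Let A be an n×n real matrix and let A* be the 2n×2n skew-symmetric block matrix [[0, A], [−Aᵀ, 0]]. Then for any two distinct indices i, j ∈ {1,…,n}, Pf(A*_{\{i, n+j\}}) = (−1)^{(n−1)(n−2)/2} · det(A_{ij}), where A*_{\{i,n+j\}} is the submatrix of A* obtained by deleting rows and columns i and n+j, and A_{ij} is the (n−1)×(n−1) matrix obtained from A by deleting row i and column j. -/

import Mathlib

open Matrix

/-- The Pfaffian of an `N × N` real matrix (for `N` even), which for
skew-symmetric matrices agrees with the sum over partitions of `{1,…,N}` into
`N/2` unordered pairs; by convention the Pfaffian is `0` when `N` is odd. -/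
noncomputable def pf {N : ℕ} (M : Matrix (Fin N) (Fin N) ℝ) : ℝ :=
  if h : N % 2 = 0 then
    ((2 ^ (N / 2) * (N / 2).factorial : ℕ) : ℝ)⁻¹ *
      ∑ σ : Equiv.Perm (Fin N), ((Equiv.Perm.sign σ : ℤ) : ℝ) *
        ∏ i : Fin (N / 2),
          M (σ ⟨2 * i.val, by have := i.isLt; omega⟩)
            (σ ⟨2 * i.val + 1, by have := i.isLt; omega⟩)
  else 0

/-- The submatrix of `M` obtained by deleting the rows and columns indexed
by the subset `I` (keeping the remaining indices in increasing order). -/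
noncomputable def delete {N : ℕ} (M : Matrix (Fin N) (Fin N) ℝ) (I : Finset (Fin N)) :
    Matrix (Fin (N - I.card)) (Fin (N - I.card)) ℝ :=
  M.submatrix (Iᶜ.orderEmbOfFin (by rw [Finset.card_compl, Fintype.card_fin]))
              (Iᶜ.orderEmbOfFin (by rw [Finset.card_compl, Fintype.card_fin]))

/-- The `(n−1) × (n−1)` minor matrix of an `n × n` matrix obtained by deleting
row `i` and column `j` (keeping the remaining indices in increasing order). -/
noncomputable def minorRC {n : ℕ} (A : Matrix (Fin n) (Fin n) ℝ) (i j : Fin n) :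
    Matrix (Fin (n - 1)) (Fin (n - 1)) ℝ :=
  A.submatrix
    (({i}ᶜ : Finset (Fin n)).orderEmbOfFin
      (by rw [Finset.card_compl, Fintype.card_fin, Finset.card_singleton]))
    (({j}ᶜ : Finset (Fin n)).orderEmbOfFin
      (by rw [Finset.card_compl, Fintype.card_fin, Finset.card_singleton]))


namespace PfAux

/-- The equivalence pairing `(l, t)` with position `2l + t`. -/
def pairEquiv (m : ℕ) : Fin m × Bool ≃ Fin (m + m) where
  toFun x := ⟨2 * x.1.val + (if x.2 then 1 else 0), by
    rcases x with ⟨⟨l, hl⟩, t⟩; cases t <;> simp <;> omega⟩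
  invFun k := (⟨k.val / 2, by omega⟩, decide (k.val % 2 = 1))
  left_inv := by
    rintro ⟨⟨l, hl⟩, t⟩
    cases t <;> simp [Prod.ext_iff, Fin.ext_iff] <;> omega
  right_inv := by
    rintro ⟨k, hk⟩
    simp [Fin.ext_iff]
    rcases Nat.mod_two_eq_zero_or_one k with h | h <;> simp [h] <;> omega

def mixEquiv (m : ℕ) : Fin m × Bool ≃ Fin m ⊕ Fin m where
  toFun x := if x.2 then Sum.inr x.1 else Sum.inl x.1
  invFun s := Sum.elim (fun l => (l, false)) (fun l => (l, true)) s
  left_inv := by rintro ⟨l, t⟩; cases t <;> simp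
  right_inv := by rintro (l | l) <;> simp

/-- The inverse riffle permutation `2l ↦ l`, `2l+1 ↦ m + l`. -/
def riffle (m : ℕ) : Equiv.Perm (Fin (m + m)) :=
  (pairEquiv m).symm.trans ((mixEquiv m).trans finSumFinEquiv)

lemma riffle_val (m : ℕ) (k : Fin (m + m)) :
    (riffle m k).val = if k.val % 2 = 0 then k.val / 2 else m + k.val / 2 := by
  rcases Nat.mod_two_eq_zero_or_one k.val with h | h <;>
    simp [riffle, pairEquiv, mixEquiv, h] <;> omega

lemma sign_eq_signAux {n : ℕ} (f : Equiv.Perm (Fin n)) :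
    Equiv.Perm.sign f = Equiv.Perm.signAux f := by
  match n with
  | 0 => rw [Subsingleton.elim f 1, Equiv.Perm.signAux_one, Equiv.Perm.sign_one]
  | 1 => rw [Subsingleton.elim f 1, Equiv.Perm.signAux_one, Equiv.Perm.sign_one]
  | (k+2) =>
    have hsurj : Function.Surjective
        (MonoidHom.mk' Equiv.Perm.signAux Equiv.Perm.signAux_mul :
          Equiv.Perm (Fin (k+2)) →* ℤˣ) := by
      intro u
      rcases Int.units_eq_one_or u with rfl | rfl
      · exact ⟨1, Equiv.Perm.signAux_one _⟩
      · exact ⟨Equiv.swap 0 1, Equiv.Perm.signAux_swap (show (0 : Fin (k+2)) ≠ 1 by simp [Fin.ext_iff])⟩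
    have := Equiv.Perm.eq_sign_of_surjective_hom hsurj
    exact (DFunLike.congr_fun this f).symm

end PfAux

namespace PfAux

lemma card_finPairsLT (m : ℕ) : (Equiv.Perm.finPairsLT m).card = m * (m - 1) / 2 := by
  unfold Equiv.Perm.finPairsLT
  rw [Finset.card_sigma]
  have : ∀ a : Fin m, ((Finset.range a.val).attachFin
      (fun _ hm => (Finset.mem_range.1 hm).trans a.2)).card = a.val := by
    intro a; rw [Finset.card_attachFin, Finset.card_range]
  rw [Finset.sum_congr rfl (fun a _ => this a), Fin.sum_univ_eq_sum_range (fun i => i),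
    Finset.sum_range_id]

lemma card_filter_pairs (m : ℕ) :
    ((Equiv.Perm.finPairsLT (m+m)).filter
      (fun x => x.1.val % 2 = 0 ∧ x.2.val % 2 = 1)).card
      = (Equiv.Perm.finPairsLT m).card := by
  refine Finset.card_bij'
    (fun x _ => (⟨⟨x.1.val / 2, by have := x.1.isLt; omega⟩,
        ⟨x.2.val / 2, by have := x.1.isLt; have := x.2.isLt; omega⟩⟩ :
        Σ _ : Fin m, Fin m))
    (fun y _ => (⟨⟨2 * y.1.val, by have := y.1.isLt; omega⟩,
        ⟨2 * y.2.val + 1, by have := y.2.isLt; omega⟩⟩ :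
        Σ _ : Fin (m+m), Fin (m+m))) ?_ ?_ ?_ ?_
  · rintro ⟨a, b⟩ ha
    simp only [Finset.mem_filter, Equiv.Perm.mem_finPairsLT, Fin.lt_def] at ha ⊢
    omega
  · rintro ⟨a, b⟩ ha
    have := a.isLt; have := b.isLt
    simp only [Finset.mem_filter, Equiv.Perm.mem_finPairsLT, Fin.lt_def] at ha ⊢
    refine ⟨by omega, by omega, by omega⟩
  · rintro ⟨a, b⟩ ha
    have := a.isLt; have := b.isLt
    simp only [Finset.mem_filter, Equiv.Perm.mem_finPairsLT, Fin.lt_def] at ha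
    refine Sigma.ext (Fin.ext ?_) (heq_of_eq (Fin.ext ?_)) <;> simp <;> omega
  · rintro ⟨a, b⟩ ha
    have := a.isLt; have := b.isLt
    refine Sigma.ext (Fin.ext ?_) (heq_of_eq (Fin.ext ?_)) <;> simp <;> omega

lemma sign_riffle (m : ℕ) :
    Equiv.Perm.sign (riffle m) = (-1 : ℤˣ) ^ (m * (m - 1) / 2) := by
  rw [sign_eq_signAux]
  unfold Equiv.Perm.signAux
  have key : ∀ x ∈ Equiv.Perm.finPairsLT (m+m),
      (if riffle m x.1 ≤ riffle m x.2 then (-1 : ℤˣ) else 1)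
        = (if x.1.val % 2 = 0 ∧ x.2.val % 2 = 1 then -1 else 1) := by
    intro x hx
    rw [Equiv.Perm.mem_finPairsLT, Fin.lt_def] at hx
    have h1 := riffle_val m x.1
    have h2 := riffle_val m x.2
    have hb1 := x.1.isLt
    have hb2 := x.2.isLt
    have hcond : (riffle m x.1 ≤ riffle m x.2) ↔
        (x.1.val % 2 = 0 ∧ x.2.val % 2 = 1) := by
      rw [Fin.le_def, h1, h2]
      rcases Nat.mod_two_eq_zero_or_one x.1.val with p1 | p1 <;>
        rcases Nat.mod_two_eq_zero_or_one x.2.val with p2 | p2 <;>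
          simp [p1, p2] <;> omega
    simp only [hcond]
  rw [Finset.prod_congr rfl key, Finset.prod_ite, Finset.prod_const, Finset.prod_const,
    one_pow, mul_one, card_filter_pairs, card_finPairsLT]

end PfAux

namespace PfAux

lemma pf_even {m : ℕ} (M : Matrix (Fin (m + m)) (Fin (m + m)) ℝ) :
    pf M = ((2 ^ m * m.factorial : ℕ) : ℝ)⁻¹ *
      ∑ σ : Equiv.Perm (Fin (m + m)), ((Equiv.Perm.sign σ : ℤ) : ℝ) *
        ∏ l : Fin m, M (σ (pairEquiv m (l, false))) (σ (pairEquiv m (l, true))) := by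
  rw [pf, dif_pos (by omega)]
  have h2 : (m + m) / 2 = m := by omega
  congr 1
  · rw [h2]
  · apply Finset.sum_congr rfl
    intro σ _
    congr 1
    apply Fintype.prod_equiv (finCongr h2)
    intro l
    congr 1 <;> apply congrArg <;> apply Fin.ext <;>
      simp [pairEquiv, finCongr]

/-- flipping the pairs selected by `ε` -/
def flipPerm {m : ℕ} (ε : Fin m → Bool) : Equiv.Perm (Fin m × Bool) :=
  Equiv.prodCongrRight (fun l => if ε l then Equiv.swap false true else 1)

lemma flipPerm_apply {m : ℕ} (ε : Fin m → Bool) (l : Fin m) (t : Bool) :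
    flipPerm ε (l, t) = (l, xor (ε l) t) := by
  cases hε : ε l <;> cases t <;>
    simp [flipPerm, Equiv.prodCongrRight, hε, Equiv.swap_apply_def]

lemma sign_flipPerm {m : ℕ} (ε : Fin m → Bool) :
    Equiv.Perm.sign (flipPerm ε) = ∏ l : Fin m, (if ε l then (-1 : ℤˣ) else 1) := by
  rw [flipPerm, Equiv.Perm.sign_prodCongrRight]
  apply Finset.prod_congr rfl
  intro l _
  cases hε : ε l <;> simp [hε, Equiv.Perm.sign_swap]

/-- The permutation associated to the data `(ε, τ, ρ)`. -/
def Phi {m : ℕ} (ε : Fin m → Bool) (τ ρ : Equiv.Perm (Fin m)) :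
    Equiv.Perm (Fin (m + m)) :=
  (pairEquiv m).symm.trans ((flipPerm ε).trans ((mixEquiv m).trans
    ((Equiv.sumCongr τ ρ).trans finSumFinEquiv)))

lemma Phi_apply {m : ℕ} (ε : Fin m → Bool) (τ ρ : Equiv.Perm (Fin m)) (l : Fin m) (t : Bool) :
    Phi ε τ ρ (pairEquiv m (l, t))
      = finSumFinEquiv ((Equiv.sumCongr τ ρ) (mixEquiv m (l, xor (ε l) t))) := by
  simp [Phi, flipPerm_apply]

lemma sign_Phi {m : ℕ} (ε : Fin m → Bool) (τ ρ : Equiv.Perm (Fin m)) :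
    Equiv.Perm.sign (Phi ε τ ρ)
      = Equiv.Perm.sign (riffle m) * (Equiv.Perm.sign τ * Equiv.Perm.sign ρ)
        * (∏ l : Fin m, (if ε l then (-1 : ℤˣ) else 1)) := by
  have hdecomp : Phi ε τ ρ =
      ((pairEquiv m).permCongr (flipPerm ε)).trans
        ((((mixEquiv m).symm.trans (pairEquiv m)).permCongr (Equiv.sumCongr τ ρ)).trans
          (riffle m)) := by
    ext k
    simp [Phi, riffle, Equiv.permCongr, Equiv.equivCongr]
  rw [hdecomp]
  rw [show ∀ (f g h : Equiv.Perm (Fin (m+m))), f.trans (g.trans h) = h * g * f from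
    fun _ _ _ => rfl]
  rw [_root_.map_mul, _root_.map_mul, Equiv.Perm.sign_permCongr, Equiv.Perm.sign_permCongr,
    Equiv.Perm.sign_sumCongr, sign_flipPerm]

lemma Phi_injective {m : ℕ} : Function.Injective
    (fun x : (Fin m → Bool) × Equiv.Perm (Fin m) × Equiv.Perm (Fin m) =>
      Phi x.1 x.2.1 x.2.2) := by
  rintro ⟨ε, τ, ρ⟩ ⟨ε', τ', ρ'⟩ h
  simp only at h
  have key : ∀ l t, (Equiv.sumCongr τ ρ) (mixEquiv m (l, xor (ε l) t))
      = (Equiv.sumCongr τ' ρ') (mixEquiv m (l, xor (ε' l) t)) := by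
    intro l t
    apply finSumFinEquiv.injective
    rw [← Phi_apply, ← Phi_apply, h]
  have hε : ε = ε' := by
    funext l
    have hthis := key l false
    cases hε : ε l <;> cases hε' : ε' l <;> rw [hε, hε'] at hthis <;>
      first
        | rfl
        | (simp [mixEquiv] at hthis)
  subst hε
  have hboth : ∀ l, τ l = τ' l ∧ ρ l = ρ' l := by
    intro l
    have h1 := key l false
    have h2 := key l true
    cases hε : ε l <;> rw [hε] at h1 h2 <;> simp [mixEquiv] at h1 h2
    · exact ⟨h1, h2⟩
    · exact ⟨h2, h1⟩
  have hτ : τ = τ' := Equiv.ext fun l => (hboth l).1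
  have hρ : ρ = ρ' := Equiv.ext fun l => (hboth l).2
  simp [hτ, hρ]

noncomputable def Msub {m : ℕ} (B : Matrix (Fin m) (Fin m) ℝ) :
    Matrix (Fin (m + m)) (Fin (m + m)) ℝ :=
  (fromBlocks 0 B (-Bᵀ) 0).submatrix
    (finSumFinEquiv (m := m) (n := m)).symm finSumFinEquiv.symm

noncomputable def termOf {m : ℕ} (B : Matrix (Fin m) (Fin m) ℝ)
    (σ : Equiv.Perm (Fin (m + m))) : ℝ :=
  ((Equiv.Perm.sign σ : ℤ) : ℝ) *
    ∏ l : Fin m, Msub B (σ (pairEquiv m (l, false))) (σ (pairEquiv m (l, true)))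

lemma termOf_Phi {m : ℕ} (B : Matrix (Fin m) (Fin m) ℝ) (ε : Fin m → Bool)
    (τ ρ : Equiv.Perm (Fin m)) :
    termOf B (Phi ε τ ρ) = ((Equiv.Perm.sign (riffle m) : ℤ) : ℝ) *
      (((Equiv.Perm.sign τ : ℤ) : ℝ) * ((Equiv.Perm.sign ρ : ℤ) : ℝ)) *
      ∏ l : Fin m, B (τ l) (ρ l) := by
  have hprod : ∀ l : Fin m,
      Msub B (Phi ε τ ρ (pairEquiv m (l, false))) (Phi ε τ ρ (pairEquiv m (l, true)))
        = (if ε l then (-1 : ℝ) else 1) * B (τ l) (ρ l) := by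
    intro l
    simp only [Msub, Matrix.submatrix_apply, Phi_apply, Equiv.symm_apply_apply]
    cases hε : ε l <;>
      simp [mixEquiv, hε, neg_one_mul]
  have hsign : ((Equiv.Perm.sign (Phi ε τ ρ) : ℤ) : ℝ)
      = ((Equiv.Perm.sign (riffle m) : ℤ) : ℝ)
        * (((Equiv.Perm.sign τ : ℤ) : ℝ) * ((Equiv.Perm.sign ρ : ℤ) : ℝ))
        * ∏ l : Fin m, (if ε l then (-1 : ℝ) else 1) := by
    rw [sign_Phi]
    push_cast
    congr 1
    apply Finset.prod_congr rfl
    intro l _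
    cases ε l <;> simp
  have hPP : (∏ l : Fin m, (if ε l then (-1 : ℝ) else 1))
      * (∏ l : Fin m, (if ε l then (-1 : ℝ) else 1)) = 1 := by
    rw [← Finset.prod_mul_distrib]
    have hll : ∀ l ∈ Finset.univ, (if ε l then (-1 : ℝ) else 1) * (if ε l then (-1 : ℝ) else 1)
        = (fun _ => (1:ℝ)) l := by
      intro l _; cases ε l <;> norm_num
    rw [Finset.prod_congr rfl hll, Finset.prod_const_one]
  rw [termOf, hsign, Finset.prod_congr rfl (fun l _ => hprod l), Finset.prod_mul_distrib]
  calc ((Equiv.Perm.sign (riffle m) : ℤ) : ℝ)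
        * (((Equiv.Perm.sign τ : ℤ) : ℝ) * ((Equiv.Perm.sign ρ : ℤ) : ℝ))
        * (∏ l : Fin m, (if ε l then (-1 : ℝ) else 1))
        * ((∏ l : Fin m, (if ε l then (-1 : ℝ) else 1)) * ∏ l : Fin m, B (τ l) (ρ l))
      = ((Equiv.Perm.sign (riffle m) : ℤ) : ℝ)
        * (((Equiv.Perm.sign τ : ℤ) : ℝ) * ((Equiv.Perm.sign ρ : ℤ) : ℝ))
        * (((∏ l : Fin m, (if ε l then (-1 : ℝ) else 1))
            * (∏ l : Fin m, (if ε l then (-1 : ℝ) else 1)))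
          * ∏ l : Fin m, B (τ l) (ρ l)) := by ring
    _ = _ := by rw [hPP, one_mul]

lemma termOf_ne_zero_mem {m : ℕ} (B : Matrix (Fin m) (Fin m) ℝ)
    (σ : Equiv.Perm (Fin (m + m))) (h : termOf B σ ≠ 0) :
    ∃ x : (Fin m → Bool) × Equiv.Perm (Fin m) × Equiv.Perm (Fin m),
      Phi x.1 x.2.1 x.2.2 = σ := by
  set E : Fin m × Bool ≃ Fin m ⊕ Fin m :=
    (pairEquiv m).trans (σ.trans finSumFinEquiv.symm) with hE
  have hfac : ∀ l : Fin m,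
      fromBlocks 0 B (-Bᵀ) 0 (E (l, false)) (E (l, true)) ≠ 0 := by
    intro l
    have h2 : (∏ l : Fin m,
        Msub B (σ (pairEquiv m (l, false))) (σ (pairEquiv m (l, true)))) ≠ 0 :=
      (mul_ne_zero_iff.mp h).2
    exact Finset.prod_ne_zero_iff.mp h2 l (Finset.mem_univ l)
  have mixed : ∀ l : Fin m,
      (∃ x y, E (l, false) = Sum.inl x ∧ E (l, true) = Sum.inr y) ∨
      (∃ x y, E (l, false) = Sum.inr x ∧ E (l, true) = Sum.inl y) := by
    intro l
    have hf := hfac l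
    rcases hEf : E (l, false) with x | x <;> rcases hEt : E (l, true) with y | y <;>
      rw [hEf, hEt] at hf
    · simp at hf
    · exact Or.inl ⟨x, y, rfl, rfl⟩
    · exact Or.inr ⟨x, y, rfl, rfl⟩
    · simp at hf
  obtain ⟨ε, τ₀, ρ₀, h1, h2⟩ : ∃ (ε : Fin m → Bool) (τ₀ ρ₀ : Fin m → Fin m),
      (∀ l, E (l, ε l) = Sum.inl (τ₀ l)) ∧ (∀ l, E (l, !(ε l)) = Sum.inr (ρ₀ l)) := by
    refine ⟨fun l => (E (l, false)).isRight,
      fun l => Sum.elim id id (E (l, (E (l, false)).isRight)),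
      fun l => Sum.elim id id (E (l, !(E (l, false)).isRight)),
      fun l => ?_, fun l => ?_⟩ <;>
      rcases mixed l with ⟨x, y, hf, ht⟩ | ⟨x, y, hf, ht⟩ <;> simp [hf, ht]
  have hτinj : Function.Injective τ₀ := by
    intro a b hab
    have : E (a, ε a) = E (b, ε b) := by rw [h1 a, h1 b, hab]
    exact congrArg Prod.fst (E.injective this)
  have hρinj : Function.Injective ρ₀ := by
    intro a b hab
    have : E (a, !(ε a)) = E (b, !(ε b)) := by rw [h2 a, h2 b, hab]
    exact congrArg Prod.fst (E.injective this)
  refine ⟨⟨ε, Equiv.ofBijective τ₀ (Finite.injective_iff_bijective.mp hτinj),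
    Equiv.ofBijective ρ₀ (Finite.injective_iff_bijective.mp hρinj)⟩, ?_⟩
  apply Equiv.ext
  intro k
  obtain ⟨⟨l, t⟩, rfl⟩ := (pairEquiv m).surjective k
  rw [Phi_apply]
  have hσ : σ (pairEquiv m (l, t)) = finSumFinEquiv (E (l, t)) := by
    simp [hE]
  rw [hσ]
  apply congrArg
  have h1l := h1 l
  have h2l := h2 l
  cases hε : ε l <;> rw [hε] at h1l h2l <;> simp only [Bool.not_false, Bool.not_true] at h2l <;>
    cases t <;>
    simp [mixEquiv, hε, h1l, h2l, Equiv.ofBijective]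

end PfAux

namespace PfAux

lemma sum_termOf {m : ℕ} (B : Matrix (Fin m) (Fin m) ℝ) :
    ∑ σ : Equiv.Perm (Fin (m + m)), termOf B σ
      = ((2 ^ m * m.factorial : ℕ) : ℝ)
        * (((Equiv.Perm.sign (riffle m) : ℤ) : ℝ) * B.det) := by
  classical
  have hzero : ∀ σ ∈ (Finset.univ : Finset (Equiv.Perm (Fin (m + m)))),
      σ ∉ (Finset.univ.image
        (fun x : (Fin m → Bool) × Equiv.Perm (Fin m) × Equiv.Perm (Fin m) =>
          Phi x.1 x.2.1 x.2.2)) → termOf B σ = 0 := by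
    intro σ _ hσ
    by_contra hne
    obtain ⟨x, hx⟩ := termOf_ne_zero_mem B σ hne
    exact hσ (Finset.mem_image.mpr ⟨x, Finset.mem_univ x, hx⟩)
  rw [← Finset.sum_subset (Finset.subset_univ _) hzero,
    Finset.sum_image (fun x _ y _ h => Phi_injective h)]
  have hinner : ∀ τ : Equiv.Perm (Fin m),
      ∑ ρ : Equiv.Perm (Fin m), ((Equiv.Perm.sign τ : ℤ) : ℝ) * ((Equiv.Perm.sign ρ : ℤ) : ℝ)
        * ∏ l : Fin m, B (τ l) (ρ l) = B.det := by
    intro τ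
    rw [← Equiv.sum_comp (Equiv.mulRight τ)
      (fun ρ => ((Equiv.Perm.sign τ : ℤ) : ℝ) * ((Equiv.Perm.sign ρ : ℤ) : ℝ)
        * ∏ l : Fin m, B (τ l) (ρ l))]
    have hστ : ∀ σ' : Equiv.Perm (Fin m),
        ((Equiv.Perm.sign τ : ℤ) : ℝ) * ((Equiv.Perm.sign (Equiv.mulRight τ σ') : ℤ) : ℝ)
          * ∏ l : Fin m, B (τ l) ((Equiv.mulRight τ σ') l)
        = ((Equiv.Perm.sign σ' : ℤ) : ℝ) * ∏ k : Fin m, B k (σ' k) := by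
      intro σ'
      have h1 : Equiv.mulRight τ σ' = σ' * τ := rfl
      have h2 : ∏ l : Fin m, B (τ l) ((σ' * τ) l) = ∏ k : Fin m, B k (σ' k) := by
        simp only [Equiv.Perm.mul_apply]
        exact Equiv.prod_comp τ (fun k => B k (σ' k))
      rw [h1, h2, _root_.map_mul]
      push_cast
      rcases Int.units_eq_one_or (Equiv.Perm.sign τ) with hs | hs <;>
        rw [hs] <;> push_cast <;> ring
    rw [Finset.sum_congr rfl (fun σ' _ => hστ σ')]
    rw [← Matrix.det_transpose B, Matrix.det_apply']
    apply Finset.sum_congr rfl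
    intro σ' _
    simp [Matrix.transpose_apply]
  calc ∑ x : (Fin m → Bool) × Equiv.Perm (Fin m) × Equiv.Perm (Fin m),
        termOf B (Phi x.1 x.2.1 x.2.2)
      = ∑ ε : Fin m → Bool, ∑ p : Equiv.Perm (Fin m) × Equiv.Perm (Fin m),
          termOf B (Phi ε p.1 p.2) := by rw [Fintype.sum_prod_type]
    _ = ∑ _ε : Fin m → Bool, (m.factorial : ℝ) *
          (((Equiv.Perm.sign (riffle m) : ℤ) : ℝ) * B.det) := by
        apply Finset.sum_congr rfl
        intro ε _
        rw [Fintype.sum_prod_type]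
        have hτ : ∀ τ : Equiv.Perm (Fin m),
            ∑ ρ : Equiv.Perm (Fin m), termOf B (Phi ε τ ρ)
              = ((Equiv.Perm.sign (riffle m) : ℤ) : ℝ) * B.det := by
          intro τ
          have : ∀ ρ : Equiv.Perm (Fin m), termOf B (Phi ε τ ρ)
              = ((Equiv.Perm.sign (riffle m) : ℤ) : ℝ) *
                (((Equiv.Perm.sign τ : ℤ) : ℝ) * ((Equiv.Perm.sign ρ : ℤ) : ℝ)
                  * ∏ l : Fin m, B (τ l) (ρ l)) := by
            intro ρ; rw [termOf_Phi]; ring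
          rw [Finset.sum_congr rfl (fun ρ _ => this ρ), ← Finset.mul_sum, hinner τ]
        rw [Finset.sum_congr rfl (fun τ _ => hτ τ), Finset.sum_const, Finset.card_univ,
          Fintype.card_perm, Fintype.card_fin, nsmul_eq_mul]
    _ = ((2 ^ m * m.factorial : ℕ) : ℝ)
        * (((Equiv.Perm.sign (riffle m) : ℤ) : ℝ) * B.det) := by
        rw [Finset.sum_const, Finset.card_univ]
        have hcard : Fintype.card (Fin m → Bool) = 2 ^ m := by
          simp [Fintype.card_fun]
        rw [hcard, nsmul_eq_mul]
        push_cast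
        ring

end PfAux

namespace PfAux

lemma pf_general {m : ℕ} (B : Matrix (Fin m) (Fin m) ℝ) :
    pf (Msub B) = (-1 : ℝ) ^ (m * (m - 1) / 2) * B.det := by
  rw [pf_even]
  have hrw : (∑ σ : Equiv.Perm (Fin (m + m)), ((Equiv.Perm.sign σ : ℤ) : ℝ) *
      ∏ l : Fin m, Msub B (σ (pairEquiv m (l, false))) (σ (pairEquiv m (l, true))))
      = ∑ σ : Equiv.Perm (Fin (m + m)), termOf B σ := rfl
  rw [hrw, sum_termOf, inv_mul_cancel_left₀ (by positivity), sign_riffle]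
  congr 1
  push_cast
  norm_num

lemma pf_cast {N N' : ℕ} (h : N' = N) (M : Matrix (Fin N) (Fin N) ℝ) :
    pf (M.submatrix (Fin.cast h) (Fin.cast h)) = pf M := by
  subst h
  rfl

end PfAux


/-- Lemma 4.1(ii): for an arbitrary `n × n` real matrix `A`, the `2n × 2n`
skew-symmetric block matrix `A* = [[0, A], [−Aᵀ, 0]]` and distinct `i, j ∈ {1,…,n}`,
`Pf(A*_{{i, n+j}}) = (−1)^{(n−1)(n−2)/2} det(A_{ij})`. -/
theorem pf_block_delete_mixed {n : ℕ} (A : Matrix (Fin n) (Fin n) ℝ)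
    (i j : Fin n) (hij : i ≠ j) :
    pf (delete ((Matrix.fromBlocks 0 A (-Aᵀ) 0).submatrix
          (finSumFinEquiv (m := n) (n := n)).symm (finSumFinEquiv (m := n) (n := n)).symm)
        {Fin.castAdd n i, Fin.natAdd n j}) =
      (-1 : ℝ) ^ ((n - 1) * (n - 2) / 2) * (minorRC A i j).det := by
  classical
  have hn : 0 < n := i.pos
  set B := minorRC A i j with hB
  set I : Finset (Fin (n + n)) := {Fin.castAdd n i, Fin.natAdd n j} with hIdef
  have hne : Fin.castAdd n i ≠ Fin.natAdd n j := by
    have h1 : (Fin.castAdd n i).val = i.val := rfl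
    have h2 : (Fin.natAdd n j).val = n + j.val := rfl
    intro hc
    rw [Fin.ext_iff, h1, h2] at hc
    omega
  have hI : I.card = 2 := by
    rw [hIdef, Finset.card_insert_of_notMem (by rw [Finset.mem_singleton]; exact hne), Finset.card_singleton]
  have h : (n + n) - I.card = (n - 1) + (n - 1) := by rw [hI]; omega
  set embi : Fin (n - 1) ↪o Fin n := ({i}ᶜ : Finset (Fin n)).orderEmbOfFin
      (by rw [Finset.card_compl, Fintype.card_fin, Finset.card_singleton]) with hembi
  set embj : Fin (n - 1) ↪o Fin n := ({j}ᶜ : Finset (Fin n)).orderEmbOfFin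
      (by rw [Finset.card_compl, Fintype.card_fin, Finset.card_singleton]) with hembj
  set f : Fin (n + n - I.card) → Fin (n + n) := fun a =>
    finSumFinEquiv (Sum.map ⇑embi ⇑embj (finSumFinEquiv.symm (Fin.cast h a))) with hf
  -- value facts
  have hvalx : ∀ (x : Fin (n + n - I.card)) (a : Fin (n - 1)),
      finSumFinEquiv.symm (Fin.cast h x) = Sum.inl a → (x : ℕ) = (a : ℕ) := by
    intro x a hsx
    have := congrArg (fun z => (finSumFinEquiv z : Fin ((n-1)+(n-1))).val) hsx
    simpa using this
  have hvalx' : ∀ (x : Fin (n + n - I.card)) (a : Fin (n - 1)),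
      finSumFinEquiv.symm (Fin.cast h x) = Sum.inr a → (x : ℕ) = (a : ℕ) + (n - 1) := by
    intro x a hsx
    have := congrArg (fun z => (finSumFinEquiv z : Fin ((n-1)+(n-1))).val) hsx
    simpa using this
  have hfl : ∀ (x : Fin (n + n - I.card)) (a : Fin (n - 1)),
      finSumFinEquiv.symm (Fin.cast h x) = Sum.inl a → f x = Fin.castAdd n (embi a) := by
    intro x a hsx
    rw [hf]
    simp only [hsx, Sum.map_inl, finSumFinEquiv_apply_left]
  have hfr : ∀ (x : Fin (n + n - I.card)) (a : Fin (n - 1)),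
      finSumFinEquiv.symm (Fin.cast h x) = Sum.inr a → f x = Fin.natAdd n (embj a) := by
    intro x a hsx
    rw [hf]
    simp only [hsx, Sum.map_inr, finSumFinEquiv_apply_right]
  have hmemf : ∀ x, f x ∈ Iᶜ := by
    intro x
    rw [Finset.mem_compl, hIdef]
    rcases hsx : finSumFinEquiv.symm (Fin.cast h x) with a | a
    · rw [hfl x a hsx]
      have h1 : embi a ∈ ({i}ᶜ : Finset (Fin n)) := Finset.orderEmbOfFin_mem _ _ _
      rw [Finset.mem_compl, Finset.mem_singleton] at h1
      intro hmem
      rcases Finset.mem_insert.mp hmem with hc | hc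
      · exact h1 (Fin.castAdd_injective _ _ hc)
      · rw [Finset.mem_singleton] at hc
        have := congrArg Fin.val hc
        simp [Fin.castAdd, Fin.natAdd] at this
        omega
    · rw [hfr x a hsx]
      have h1 : embj a ∈ ({j}ᶜ : Finset (Fin n)) := Finset.orderEmbOfFin_mem _ _ _
      rw [Finset.mem_compl, Finset.mem_singleton] at h1
      intro hmem
      rcases Finset.mem_insert.mp hmem with hc | hc
      · have := congrArg Fin.val hc
        simp [Fin.castAdd, Fin.natAdd] at this
        omega
      · rw [Finset.mem_singleton] at hc
        exact h1 (by
          have := congrArg Fin.val hc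
          simp only [Fin.coe_natAdd] at this
          exact Fin.ext (by omega))
  have hmono : StrictMono f := by
    intro x y hxy
    rw [Fin.lt_def] at hxy
    rcases hsx : finSumFinEquiv.symm (Fin.cast h x) with a | a <;>
      rcases hsy : finSumFinEquiv.symm (Fin.cast h y) with b | b
    · have hva := hvalx x a hsx
      have hvb := hvalx y b hsy
      rw [hfl x a hsx, hfl y b hsy, Fin.lt_def]
      have : a < b := by rw [Fin.lt_def]; omega
      have := embi.strictMono this
      rw [Fin.lt_def] at this
      simpa using this
    · have := (embi a).isLt
      rw [hfl x a hsx, hfr y b hsy, Fin.lt_def]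
      simp only [Fin.coe_castAdd, Fin.coe_natAdd]
      omega
    · have hva := hvalx' x a hsx
      have hvb := hvalx y b hsy
      have := b.isLt
      omega
    · have hva := hvalx' x a hsx
      have hvb := hvalx' y b hsy
      rw [hfr x a hsx, hfr y b hsy, Fin.lt_def]
      have : a < b := by rw [Fin.lt_def]; omega
      have := embj.strictMono this
      rw [Fin.lt_def] at this
      simp only [Fin.coe_natAdd]
      omega
  have huniq := Finset.orderEmbOfFin_unique
    (s := Iᶜ) (k := n + n - I.card)
    (by rw [Finset.card_compl, Fintype.card_fin] :
      Iᶜ.card = n + n - I.card) hmemf hmono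
  have hval : ∀ x, (Iᶜ.orderEmbOfFin
      (by rw [Finset.card_compl, Fintype.card_fin] : Iᶜ.card = n + n - I.card)) x = f x :=
    fun x => (congrFun huniq x).symm
  have hmat : delete ((Matrix.fromBlocks 0 A (-Aᵀ) 0).submatrix
        (finSumFinEquiv (m := n) (n := n)).symm finSumFinEquiv.symm) I
      = (PfAux.Msub B).submatrix (Fin.cast h) (Fin.cast h) := by
    ext a b
    show (Matrix.fromBlocks 0 A (-Aᵀ) 0).submatrix
        (finSumFinEquiv (m := n) (n := n)).symm finSumFinEquiv.symm
        ((Iᶜ.orderEmbOfFin _) a) ((Iᶜ.orderEmbOfFin _) b)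
      = PfAux.Msub B (Fin.cast h a) (Fin.cast h b)
    rw [hval a, hval b]
    show Matrix.fromBlocks 0 A (-Aᵀ) 0 (finSumFinEquiv.symm (f a)) (finSumFinEquiv.symm (f b))
      = Matrix.fromBlocks 0 B (-Bᵀ) 0 (finSumFinEquiv.symm (Fin.cast h a))
          (finSumFinEquiv.symm (Fin.cast h b))
    rw [hf]
    simp only [Equiv.symm_apply_apply]
    rcases hsa : finSumFinEquiv.symm (Fin.cast h a) with x | x <;>
      rcases hsb : finSumFinEquiv.symm (Fin.cast h b) with y | y <;>
      simp [hB, minorRC, Matrix.fromBlocks, hembi, hembj]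
  rw [hmat, PfAux.pf_cast h (PfAux.Msub B), PfAux.pf_general]
  congr 2
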